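/- arXiv:1811.01173 — 3 statements merged into one kernel-verified Lean document; each statement's English description precedes it below -/
import Mathlib

section
/- Let (M, ρ) be a bounded metric space and let I : M → M be an isometry (ρ(I(x), I(y)) = ρ(x, y) for all x, y). Suppose x, y, t ∈ M satisfy: ρ(x, y) = diam(M), ρ(x, t) + ρ(t, I(x)) = ρ(x, I(x)) (t lies on a shortest path from x to I(x)), and ρ(y, t) + ρ(t, I(y)) = ρ(y, I(y)) (t lies on a shortest path from y to I(y)). Then ρ(x, I(x)) = diam(M) and ρ(y, I(y)) = diam(M). -/
open Metric Set

/-- If `x, y` realize the diameter of a bounded metric space `M`, `I` is an isometry of `M`,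
and some point `t` lies simultaneously on a shortest path from `x` to `I x` and on a shortest
path from `y` to `I y`, then both `ρ(x, I x)` and `ρ(y, I y)` equal the diameter. -/
theorem dist_to_image_eq_diam_of_common_point
    {M : Type*} [MetricSpace M]
    (hbdd : Bornology.IsBounded (Set.univ : Set M))
    (I : M → M) (hiso : Isometry I)
    (x y t : M)
    (hxy : dist x y = Metric.diam (Set.univ : Set M))
    (hxt : dist x t + dist t (I x) = dist x (I x))
    (hyt : dist y t + dist t (I y) = dist y (I y)) :
    dist x (I x) = Metric.diam (Set.univ : Set M) ∧
      dist y (I y) = Metric.diam (Set.univ : Set M) := by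
  have h1 : dist x (I x) ≤ Metric.diam (Set.univ : Set M) :=
    dist_le_diam_of_mem hbdd (mem_univ _) (mem_univ _)
  have h2 : dist y (I y) ≤ Metric.diam (Set.univ : Set M) :=
    dist_le_diam_of_mem hbdd (mem_univ _) (mem_univ _)
  have h3 : dist x y ≤ dist x t + dist t y := dist_triangle _ _ _
  have h4 : dist (I x) (I y) ≤ dist (I x) t + dist t (I y) := dist_triangle _ _ _
  have h5 : dist (I x) (I y) = dist x y := hiso.dist_eq x y
  have h6 : dist t y = dist y t := dist_comm _ _
  have h7 : dist (I x) t = dist t (I x) := dist_comm _ _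
  constructor <;> linarith
end

section
/- Let (M, ρ) be a compact metric space, I : M → M an involutive isometry without fixed points, x ∈ M, and let γ : [0, L] → M be a shortest path from x to I(x), i.e., an isometric embedding with γ(0) = x, γ(L) = I(x), and ρ(γ(a), γ(b)) = |a − b| for all a, b ∈ [0, L]. Then there exist s, t ∈ [0, L] with s < t such that γ(t) = I(γ(s)), the value ρ(γ(s), I(γ(s))) is minimal among all ρ(γ(u), I(γ(u))) over parameters u ∈ [0, L] with I(γ(u)) ∈ γ([0, L]), and moreover for any u, v ∈ [s, t] with γ(v) = I(γ(u)) one has {u, v} = {s, t}; that is, the subarc γ([s, t]) meets its image under I only in its two endpoints. -/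
open Metric Set

/-- Let `M` be a compact metric space, `I` an involutive fixed-point-free isometry, and
`γ : [0, L] → M` a shortest path (unit-speed geodesic) from `x` to `I x`. Then there are
parameters `s < t` in `[0, L]` with `γ t = I (γ s)`, such that `ρ(γ s, I (γ s))` is minimal
among all `ρ(γ u, I (γ u))` with `u ∈ [0, L]` and `I (γ u) ∈ γ([0, L])`, and the subarc
`γ([s, t])` meets its image under `I` only at its endpoints: any `u, v ∈ [s, t]` with
`γ v = I (γ u)` satisfy `{u, v} = {s, t}`. -/
theorem exists_minimal_antipodal_subarc
    {M : Type*} [MetricSpace M] [CompactSpace M]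
    (I : M → M) (hiso : Isometry I) (hinv : Function.Involutive I)
    (hfree : ∀ z : M, I z ≠ z)
    (x : M) (L : ℝ) (hL : 0 ≤ L) (γ : ℝ → M)
    (hγ0 : γ 0 = x) (hγL : γ L = I x)
    (hgeo : ∀ a ∈ Set.Icc (0 : ℝ) L, ∀ b ∈ Set.Icc (0 : ℝ) L,
      dist (γ a) (γ b) = |a - b|) :
    ∃ s ∈ Set.Icc (0 : ℝ) L, ∃ t ∈ Set.Icc (0 : ℝ) L, s < t ∧
      γ t = I (γ s) ∧
      (∀ u ∈ Set.Icc (0 : ℝ) L, I (γ u) ∈ γ '' Set.Icc (0 : ℝ) L →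
        dist (γ s) (I (γ s)) ≤ dist (γ u) (I (γ u))) ∧
      (∀ u ∈ Set.Icc s t, ∀ v ∈ Set.Icc s t,
        γ v = I (γ u) → ({u, v} : Set ℝ) = {s, t}) := by
  have h0mem : (0:ℝ) ∈ Set.Icc (0:ℝ) L := ⟨le_refl 0, hL⟩
  have hLmem : L ∈ Set.Icc (0:ℝ) L := ⟨hL, le_refl L⟩
  -- continuity of γ on [0, L]
  have hγc : ContinuousOn γ (Set.Icc 0 L) := by
    apply LipschitzOnWith.continuousOn (K := 1)
    rw [lipschitzOnWith_iff_dist_le_mul]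
    intro a ha b hb
    rw [hgeo a ha b hb]
    simp [Real.dist_eq]
  -- the compact set of antipodal pairs
  set K : Set (ℝ × ℝ) := (Set.Icc (0:ℝ) L) ×ˢ (Set.Icc (0:ℝ) L) with hK
  set A : Set (ℝ × ℝ) := {p | p ∈ K ∧ γ p.2 = I (γ p.1)} with hA
  have hKc : IsCompact K := isCompact_Icc.prod isCompact_Icc
  have hKcl : IsClosed K := isClosed_Icc.prod isClosed_Icc
  have hf : ContinuousOn (fun p : ℝ × ℝ => (γ p.2, I (γ p.1))) K := by
    apply ContinuousOn.prodMk
    · exact hγc.comp continuous_snd.continuousOn (fun p hp => hp.2)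
    · exact hiso.continuous.comp_continuousOn
        (hγc.comp continuous_fst.continuousOn (fun p hp => hp.1))
  have hAeq : A = K ∩ (fun p : ℝ × ℝ => (γ p.2, I (γ p.1))) ⁻¹' (Set.diagonal M) := by
    ext p
    simp [hA, Set.diagonal, and_comm]
  have hAcl : IsClosed A := by
    rw [hAeq]
    exact hf.preimage_isClosed_of_isClosed hKcl isClosed_diagonal
  have hAc : IsCompact A := hKc.of_isClosed_subset hAcl (fun p hp => hp.1)
  have hAne : ((0:ℝ), L) ∈ A := by
    refine ⟨⟨h0mem, hLmem⟩, ?_⟩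
    simp only [hγ0, hγL]
  obtain ⟨p, hpA, hmin⟩ := hAc.exists_isMinOn ⟨_, hAne⟩
    ((continuous_fst.sub continuous_snd).abs.continuousOn :
      ContinuousOn (fun p : ℝ × ℝ => |p.1 - p.2|) A)
  obtain ⟨⟨hp1, hp2⟩, hpe⟩ := hpA
  have hab : p.1 ≠ p.2 := by
    intro h
    rw [← h] at hpe
    exact hfree (γ p.1) hpe.symm
  set s := min p.1 p.2 with hs
  set t := max p.1 p.2 with ht
  have hst : s < t := min_lt_max.mpr hab
  have hsmem : s ∈ Set.Icc (0:ℝ) L := ⟨le_min hp1.1 hp2.1, min_le_of_left_le hp1.2⟩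
  have htmem : t ∈ Set.Icc (0:ℝ) L := ⟨le_max_of_le_left hp1.1, max_le hp1.2 hp2.2⟩
  have hts : t - s = |p.1 - p.2| := by rw [max_sub_min_eq_abs, abs_sub_comm]
  have hγts : γ t = I (γ s) := by
    rcases hab.lt_or_gt with h | h
    · rw [hs, ht, min_eq_left h.le, max_eq_right h.le]; exact hpe
    · rw [hs, ht, min_eq_right h.le, max_eq_left h.le, hpe, hinv]
  -- key bound: any antipodal pair has gap ≥ t - s
  have hkey : ∀ q ∈ A, t - s ≤ |q.1 - q.2| := by
    intro q hq
    rw [hts]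
    exact isMinOn_iff.mp hmin q hq
  refine ⟨s, hsmem, t, htmem, hst, hγts, ?_, ?_⟩
  · -- minimality
    intro u hu hmem
    obtain ⟨v, hv, hγv⟩ := hmem
    have hq : ((u, v) : ℝ × ℝ) ∈ A := ⟨⟨hu, hv⟩, hγv⟩
    have h1 : dist (γ u) (I (γ u)) = |u - v| := by
      rw [← hγv, hgeo u hu v hv]
    have h2 : dist (γ s) (I (γ s)) = t - s := by
      rw [← hγts, hgeo s hsmem t htmem, abs_sub_comm,
        abs_of_nonneg (sub_nonneg.mpr hst.le)]
    rw [h1, h2]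
    exact hkey _ hq
  · -- endpoint property
    intro u hu v hv hγuv
    have hu' : u ∈ Set.Icc (0:ℝ) L :=
      ⟨hsmem.1.trans hu.1, hu.2.trans htmem.2⟩
    have hv' : v ∈ Set.Icc (0:ℝ) L :=
      ⟨hsmem.1.trans hv.1, hv.2.trans htmem.2⟩
    have hq : ((u, v) : ℝ × ℝ) ∈ A := ⟨⟨hu', hv'⟩, hγuv⟩
    have h1 : t - s ≤ |u - v| := hkey _ hq
    rcases le_total u v with h | h
    · have : v - u = t - s := by
        rw [abs_of_nonpos (sub_nonpos.mpr h), neg_sub] at h1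
        have := hu.1; have := hv.2; linarith
      have hus : u = s := by have := hu.1; have := hv.2; linarith
      have hvt : v = t := by have := hu.1; have := hv.2; linarith
      rw [hus, hvt]
    · have : u - v = t - s := by
        rw [abs_of_nonneg (sub_nonneg.mpr h)] at h1
        have := hv.1; have := hu.2; linarith
      have hvs : v = s := by have := hv.1; have := hu.2; linarith
      have hut : u = t := by have := hv.1; have := hu.2; linarith
      rw [hvs, hut, Set.pair_comm]
end

section
/- Let (M, ρ) be a compact length metric space (the distance between any two points equals the infimum of the lengths of paths joining them) that is homeomorphic to the circle S¹, and let I : M → M be an involutive isometry without fixed points. Then there exists a point x ∈ M such that diam(M) = ρ(x, I(x)). -/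
open Metric Set

/-- The length of a path in a (pseudo-e)metric space, as its total variation. -/
noncomputable def pathELength {M : Type*} [PseudoEMetricSpace M] {x y : M}
    (γ : Path x y) : ENNReal :=
  eVariationOn (γ : unitInterval → M) Set.univ

/-- A metric space is a length space if the distance between any two points equals
the infimum of the lengths of all paths joining them. -/
def IsLengthSpace (M : Type*) [MetricSpace M] : Prop :=
  ∀ x y : M, edist x y = ⨅ γ : Path x y, pathELength γ



/-- A continuous involution of a preconnected subset of `ℝ` has a fixed point. -/
theorem aux_fix_real {T : Set ℝ} (hne : T.Nonempty) (hT : IsPreconnected T)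
    {ψ : ℝ → ℝ} (hcont : ContinuousOn ψ T) (hmap : Set.MapsTo ψ T T)
    (hinv : ∀ t ∈ T, ψ (ψ t) = t) : ∃ t ∈ T, ψ t = t := by
  obtain ⟨c, hc0⟩ := hne
  rcases lt_trichotomy (ψ c) c with h | h | h
  · obtain ⟨x, hx, he⟩ := hT.intermediate_value₂ hc0 (hmap hc0) hcont continuousOn_id
      h.le (by rw [hinv c hc0]; exact h.le)
    exact ⟨x, hx, he⟩
  · exact ⟨c, hc0, h⟩
  · obtain ⟨x, hx, he⟩ := hT.intermediate_value₂ hc0 (hmap hc0) continuousOn_id hcont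
      h.le (by rw [hinv c hc0]; exact h.le)
    exact ⟨x, hx, he.symm⟩


/-- A fixed-point-free continuous involution of the circle maps no proper nonempty
preconnected subset into itself. -/
theorem aux_circle {J : sphere (0 : ℂ) 1 → sphere (0 : ℂ) 1} (hJc : Continuous J)
    (hJinv : Function.Involutive J) (hJfree : ∀ p, J p ≠ p)
    {C : Set (sphere (0 : ℂ) 1)} (hCne : C.Nonempty) (hC : IsPreconnected C)
    (hmap : Set.MapsTo J C C) {z : sphere (0 : ℂ) 1} (hz : z ∉ C) : False := by
  have hznorm : ‖(z : ℂ)‖ = 1 := by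
    have := z.2; rwa [mem_sphere_zero_iff_norm] at this
  set w : ℂ := -(starRingEnd ℂ) z with hw_def
  have hw : ‖w‖ = 1 := by simp [hw_def, hznorm]
  have hw0 : w ≠ 0 := by
    intro h; rw [h] at hw; simp at hw
  have hwz : w * (z : ℂ) = -1 := by
    rw [hw_def]; rw [neg_mul]
    rw [mul_comm, Complex.mul_conj]
    rw [← Complex.sq_norm, hznorm]; norm_num
  have habs : ∀ p : sphere (0 : ℂ) 1, ‖w * (p : ℂ)‖ = 1 := by
    intro p
    have hp : ‖(p : ℂ)‖ = 1 := by
      have := p.2; rwa [mem_sphere_zero_iff_norm] at this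
    rw [norm_mul, hw, hp, one_mul]
  have hslit : ∀ p : sphere (0 : ℂ) 1, p ≠ z → (w * (p : ℂ)) ∈ Complex.slitPlane := by
    intro p hp
    rw [Complex.mem_slitPlane_iff]
    by_contra hcon
    push_neg at hcon
    obtain ⟨hre, him⟩ := hcon
    have hζ : (w * (p : ℂ)) = ((w * (p : ℂ)).re : ℂ) := by
      apply Complex.ext <;> simp [him]
    have h1 : |(w * (p : ℂ)).re| = 1 := by
      have h2 := habs p
      rw [hζ, Complex.norm_real, Real.norm_eq_abs] at h2; exact h2
    have hre1 : (w * (p : ℂ)).re = -1 := by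
      rcases abs_eq (by norm_num : (0:ℝ) ≤ 1) |>.mp h1 with h' | h'
      · exfalso; rw [h'] at hre; norm_num at hre
      · exact h'
    have : w * (p : ℂ) = -1 := by rw [hζ, hre1]; norm_num
    have : w * (p : ℂ) = w * (z : ℂ) := by rw [this, hwz]
    exact hp (Subtype.ext (mul_left_cancel₀ hw0 this))
  set φ : sphere (0 : ℂ) 1 → ℝ := fun p => Complex.arg (w * (p : ℂ)) with hφ_def
  have hinj : ∀ p q : sphere (0 : ℂ) 1, φ p = φ q → p = q := by
    intro p q h
    have := Complex.ext_norm_arg ((habs p).trans (habs q).symm) h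
    exact Subtype.ext (mul_left_cancel₀ hw0 this)
  have hιmem : ∀ t : ℝ, w⁻¹ * Complex.exp (t * Complex.I) ∈ sphere (0 : ℂ) 1 := by
    intro t
    rw [mem_sphere_zero_iff_norm, norm_mul, Complex.norm_exp_ofReal_mul_I, mul_one,
      norm_inv, hw, inv_one]
  set ι : ℝ → sphere (0 : ℂ) 1 := fun t => ⟨w⁻¹ * Complex.exp (t * Complex.I), hιmem t⟩
    with hι_def
  have hιφ : ∀ p : sphere (0 : ℂ) 1, ι (φ p) = p := by
    intro p
    apply Subtype.ext
    show w⁻¹ * Complex.exp ((Complex.arg (w * (p : ℂ)) : ℂ) * Complex.I) = (p : ℂ)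
    have h1 := Complex.norm_mul_exp_arg_mul_I (w * (p : ℂ))
    rw [habs p] at h1
    rw [Complex.ofReal_one, one_mul] at h1
    rw [h1, inv_mul_cancel_left₀ hw0]
  have hιcont : Continuous ι := by
    apply Continuous.subtype_mk
    exact continuous_const.mul (Complex.continuous_exp.comp
      (Complex.continuous_ofReal.mul continuous_const))
  have hφcont : ∀ p : sphere (0 : ℂ) 1, p ≠ z → ContinuousAt φ p := by
    intro p hp
    have hg : Continuous (fun q : sphere (0 : ℂ) 1 => w * (q : ℂ)) :=
      continuous_const.mul continuous_subtype_val
    exact ContinuousAt.comp (g := Complex.arg) (Complex.continuousAt_arg (hslit p hp))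
      hg.continuousAt
  set T : Set ℝ := φ '' C with hT_def
  set ψ : ℝ → ℝ := fun t => φ (J (ι t)) with hψ_def
  have hCz : ∀ p, p ∈ C → p ≠ z := fun p hp h => hz (h ▸ hp)
  have hTcont : ContinuousOn φ C := fun p hp => (hφcont p (hCz p hp)).continuousWithinAt
  have hTne : T.Nonempty := hCne.image φ
  have hTpre : IsPreconnected T := hC.image φ hTcont
  have hψcont : ContinuousOn ψ T := by
    rintro t ⟨p, hp, rfl⟩
    have h1 : ι (φ p) = p := hιφ p
    have h2 : ContinuousAt (fun t => J (ι t)) (φ p) := (hJc.comp hιcont).continuousAt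
    have h3 : ContinuousAt φ (J (ι (φ p))) := by
      rw [h1]; exact hφcont _ (hCz _ (hmap hp))
    exact (ContinuousAt.comp (f := fun t => J (ι t)) (x := φ p) h3 h2).continuousWithinAt
  have hψmap : Set.MapsTo ψ T T := by
    rintro t ⟨p, hp, rfl⟩
    exact ⟨J p, hmap hp, by rw [hψ_def]; simp only; rw [hιφ p]⟩
  have hψinv : ∀ t ∈ T, ψ (ψ t) = t := by
    rintro t ⟨p, hp, rfl⟩
    show φ (J (ι (φ (J (ι (φ p)))))) = φ p
    rw [hιφ p, hιφ (J p), hJinv p]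
  obtain ⟨t, htT, hfix⟩ := aux_fix_real hTne hTpre hψcont hψmap hψinv
  obtain ⟨p, hp, rfl⟩ := htT
  have hfix' : φ (J (ι (φ p))) = φ p := hfix
  rw [hιφ p] at hfix'
  exact hJfree p (hinj _ _ hfix')


/-- On a space homeomorphic to the circle, a preconnected set containing a point and
its image under a fixed-point-free continuous involution must meet `{v, I v}` for
every point `v`. -/
theorem aux_meet {M : Type*} [TopologicalSpace M]
    (e : M ≃ₜ Metric.sphere (0 : ℂ) 1)
    (I : M → M) (hIc : Continuous I) (hinv : Function.Involutive I)
    (hfree : ∀ x, I x ≠ x) {S : Set M} (hS : IsPreconnected S)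
    {u v : M} (hu : u ∈ S) (hIu : I u ∈ S) (hv : v ∉ S) (hIv : I v ∉ S) : False := by
  set U : Set M := {v, I v}ᶜ with hU_def
  have hSU : S ⊆ U := by
    intro x hx hmem
    rcases hmem with h | h
    · exact hv (h ▸ hx)
    · exact hIv (h ▸ hx)
  set C : Set M := connectedComponentIn U u with hC_def
  have hSC : S ⊆ C := hS.subset_connectedComponentIn hu hSU
  have hCU : C ⊆ U := connectedComponentIn_subset U u
  have hCpre : IsPreconnected C := isPreconnected_connectedComponentIn
  have hIU : ∀ x ∈ U, I x ∈ U := by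
    intro x hx hmem
    apply hx
    simp only [mem_insert_iff, mem_singleton_iff] at hmem ⊢
    rcases hmem with h | h
    · right; rw [← h, hinv]
    · left; exact hinv.injective h
  have hmapC : Set.MapsTo I C C := by
    have himg : IsPreconnected (I '' C) := hCpre.image I hIc.continuousOn
    have hsub : I '' C ⊆ U := by
      rintro _ ⟨x, hx, rfl⟩; exact hIU x (hCU hx)
    have huin : u ∈ I '' C := ⟨I u, hSC hIu, hinv u⟩
    have : I '' C ⊆ C := by
      rw [hC_def, connectedComponentIn_eq (show u ∈ connectedComponentIn U u from
        mem_connectedComponentIn (hSU hu))]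
      exact himg.subset_connectedComponentIn huin hsub
    exact fun x hx => this ⟨x, hx, rfl⟩
  -- transport to the circle
  set J : sphere (0 : ℂ) 1 → sphere (0 : ℂ) 1 := fun p => e (I (e.symm p)) with hJ_def
  have hJc : Continuous J := e.continuous.comp (hIc.comp e.symm.continuous)
  have hJinv : Function.Involutive J := by
    intro p
    simp only [hJ_def, Homeomorph.symm_apply_apply, hinv (e.symm p), Homeomorph.apply_symm_apply]
  have hJfree : ∀ p, J p ≠ p := by
    intro p hp
    apply hfree (e.symm p)
    have h2 : e.symm (e (I (e.symm p))) = e.symm p := congrArg e.symm hp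
    rwa [Homeomorph.symm_apply_apply] at h2
  have hCne : (e '' C).Nonempty := ⟨e u, u, mem_connectedComponentIn (hSU hu), rfl⟩
  have hCpre' : IsPreconnected (e '' C) := hCpre.image e e.continuous.continuousOn
  have hmap' : Set.MapsTo J (e '' C) (e '' C) := by
    rintro _ ⟨x, hx, rfl⟩
    exact ⟨I x, hmapC hx, by simp [hJ_def]⟩
  have hz : e v ∉ e '' C := by
    rintro ⟨x, hx, hex⟩
    have : x = v := e.injective hex
    exact hCU hx (by rw [this]; left; rfl)
  exact aux_circle hJc hJinv hJfree hCne hCpre' hmap' hz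



/-- Splitting a path at an intermediate point bounds the sum of the two distances. -/
theorem aux_split {M : Type*} [PseudoEMetricSpace M] {x y : M} (γ : Path x y)
    (t : unitInterval) :
    edist x (γ t) + edist (γ t) y ≤ pathELength γ := by
  have hmono : Monotone (fun n : ℕ => if n = 0 then (0 : unitInterval) else if n = 1 then t else 1) := by
    apply monotone_nat_of_le_succ
    intro n
    match n with
    | 0 => simp [unitInterval.nonneg']
    | 1 => simpa using unitInterval.le_one'
    | (k+2) => simp
  have h := eVariationOn.sum_le (f := (γ : unitInterval → M)) (n := 2) hmono
    (fun i => Set.mem_univ _)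
  simp only [Finset.sum_range_succ, Finset.sum_range_zero, zero_add] at h
  norm_num at h
  calc edist x (γ t) + edist (γ t) y = edist (γ t) x + edist y (γ t) := by
        rw [edist_comm x (γ t), edist_comm (γ t) y]
    _ ≤ pathELength γ := h


noncomputable def complexToE2 : ℂ ≃ₗᵢ[ℝ] EuclideanSpace ℝ (Fin 2) :=
  Complex.isometryOfOrthonormal (EuclideanSpace.basisFun (Fin 2) ℝ)

noncomputable def sphereHomeoCircle :
    Metric.sphere (0 : EuclideanSpace ℝ (Fin 2)) 1 ≃ₜ Metric.sphere (0 : ℂ) 1 where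
  toFun p := ⟨complexToE2.symm p, by
      rw [mem_sphere_zero_iff_norm, complexToE2.symm.norm_map]
      exact mem_sphere_zero_iff_norm.mp p.2⟩
  invFun q := ⟨complexToE2 q, by
      rw [mem_sphere_zero_iff_norm, complexToE2.norm_map]
      exact mem_sphere_zero_iff_norm.mp q.2⟩
  left_inv p := Subtype.ext (by simp)
  right_inv q := Subtype.ext (by simp)
  continuous_toFun := (complexToE2.symm.continuous.comp continuous_subtype_val).subtype_mk
    (fun p => by
      rw [Function.comp_apply, mem_sphere_zero_iff_norm, complexToE2.symm.norm_map]
      exact mem_sphere_zero_iff_norm.mp p.2)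
  continuous_invFun := (complexToE2.continuous.comp continuous_subtype_val).subtype_mk
    (fun q => by
      rw [Function.comp_apply, mem_sphere_zero_iff_norm, complexToE2.norm_map]
      exact mem_sphere_zero_iff_norm.mp q.2)

/-- If `(M, ρ)` is a compact length metric space homeomorphic to the circle `S¹` and
`I : M → M` is an involutive isometry without fixed points, then there is a point
`x ∈ M` such that `diam M = ρ(x, I x)`. -/

theorem geodesic_diameter_of_circle_with_involutive_isometry
    {M : Type*} [MetricSpace M] [CompactSpace M]
    (hlength : IsLengthSpace M)
    (hhomeo : Nonempty (M ≃ₜ Metric.sphere (0 : EuclideanSpace ℝ (Fin 2)) 1))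
    (I : M → M) (hiso : Isometry I) (hinv : Function.Involutive I)
    (hfree : ∀ x : M, I x ≠ x) :
    ∃ x : M, Metric.diam (Set.univ : Set M) = dist x (I x) := by
  obtain ⟨e₀⟩ := hhomeo
  have e : M ≃ₜ Metric.sphere (0 : ℂ) 1 := e₀.trans sphereHomeoCircle
  have key : ∀ u v : M, edist u v ≤ edist u (I u) := by
    intro u v
    refine ENNReal.le_of_forall_pos_le_add fun ε hε _ => ?_
    have hlt : ⨅ γ : Path u (I u), pathELength γ < edist u (I u) + ε := by
      rw [← hlength u (I u)]
      exact ENNReal.lt_add_right (edist_ne_top u (I u)) (by exact_mod_cast hε.ne')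
    obtain ⟨γ, hγ⟩ := iInf_lt_iff.mp hlt
    have hscon : IsPreconnected (Set.range (γ : unitInterval → M)) :=
      (isConnected_range γ.continuous).isPreconnected
    have huS : u ∈ Set.range (γ : unitInterval → M) := ⟨0, γ.source⟩
    have hIuS : I u ∈ Set.range (γ : unitInterval → M) := ⟨1, γ.target⟩
    by_cases hv : v ∈ Set.range (γ : unitInterval → M)
    · obtain ⟨t, ht⟩ := hv
      have h2 := aux_split γ t
      rw [ht] at h2
      calc edist u v ≤ edist u v + edist v (I u) := le_self_add
        _ ≤ pathELength γ := h2
        _ ≤ edist u (I u) + ε := hγ.le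
    · by_cases hIv : I v ∈ Set.range (γ : unitInterval → M)
      · obtain ⟨t, ht⟩ := hIv
        have h2 := aux_split γ t
        rw [ht] at h2
        have h3 : edist u v = edist (I v) (I u) := by rw [hiso.edist_eq, edist_comm]
        calc edist u v = edist (I v) (I u) := h3
          _ ≤ edist u (I v) + edist (I v) (I u) := le_add_self
          _ ≤ pathELength γ := h2
          _ ≤ edist u (I u) + ε := hγ.le
      · exact (aux_meet e I hiso.continuous hinv hfree hscon huS hIuS hv hIv).elim
  have keyd : ∀ u v : M, dist u v ≤ dist u (I u) := by
    intro u v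
    have h := key u v
    rw [edist_dist, edist_dist, ENNReal.ofReal_le_ofReal_iff dist_nonneg] at h
    exact h
  have hne : Nonempty M := ⟨e.symm ⟨1, by rw [mem_sphere_zero_iff_norm]; simp⟩⟩
  have hcont : Continuous fun x : M => dist x (I x) := continuous_id.dist hiso.continuous
  obtain ⟨x, -, hx⟩ := isCompact_univ.exists_isMaxOn Set.univ_nonempty hcont.continuousOn
  refine ⟨x, le_antisymm ?_ ?_⟩
  · exact Metric.diam_le_of_forall_dist_le dist_nonneg
      fun u _ v _ => (keyd u v).trans (hx (Set.mem_univ u))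
  · exact Metric.dist_le_diam_of_mem isCompact_univ.isBounded (Set.mem_univ x) (Set.mem_univ (I x))
end
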